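/- Let V = v₀…v_{n-1} be a cyclically reduced word whose cyclic class is nonpower. Let (i,j) and (k,h) be two distinct pairs of indices in {0,…,n-1}² satisfying i ≠ j, v_i ≠ v_j, v̄_i ≠ v_{j-1}, and k ≠ h, v_k ≠ v_h, v̄_k ≠ v_{h-1}. Then for any integer m ≥ 2 and any integer l ≥ 1, the words V_i^m V_{i,j} and V_k^l V_{k,h} are not cyclic permutations of one another. -/

import Mathlib

/-- The word `v_i v_{i+1} … v_{i+len-1}` read off from the letter function `v`. -/
def seg {A : Type*} (v : ℕ → A) (i len : ℕ) : List A :=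
  (List.range len).map (fun t => v (i + t))

/-- Freely reduced: no letter is followed by its formal inverse. -/
def FRed {A : Type*} (bar : A → A) (w : List A) : Prop :=
  w.Chain' (fun x y => y ≠ bar x)

/-- Cyclically reduced: every rotation is freely reduced. -/
def CRed {A : Type*} (bar : A → A) (w : List A) : Prop :=
  ∀ r, FRed bar (w.rotate r)

/-- `p`-fold concatenation power of a word. -/
def pw {A : Type*} (w : List A) (m : ℕ) : List A := (List.replicate m w).flatten

/-- `w₂` is a cyclic rotation of `w₁`. -/
def IsRot {A : Type*} (w₁ w₂ : List A) : Prop := ∃ r, w₂ = w₁.rotate r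

/-- The cyclic class of `w` is not that of a proper power. -/
def Nonpower {A : Type*} (w : List A) : Prop :=
  ¬ ∃ (u : List A) (p : ℕ), 2 ≤ p ∧ IsRot (pw u p) w

/-! Since `V` is not a proper power, `v` has no period smaller than `n`, so a window of length
at least `n` of the periodic word determines its starting point modulo `n`. Both words are
windows of `v` of the same length `N ≥ 2n`, and `N ≢ 0 (mod n)`. A rotation cuts one window into
two pieces, at least one of which has length `≥ n` and so pins down the offset; every possible
offset then forces `(i, j) = (k, h)`, `v_i = v_j`, `v_k = v_h` or `N ≡ 0 (mod n)`. -/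

open Function

section Words

variable {A : Type*}

lemma seg_length (v : ℕ → A) (x L : ℕ) : (seg v x L).length = L := by simp [seg]

lemma seg_add (v : ℕ → A) (x p q : ℕ) : seg v x (p + q) = seg v x p ++ seg v (x + p) q := by
  simp only [seg, List.range_add, List.map_append, List.map_map]
  congr 1
  exact List.map_congr_left fun t _ => by simp [Nat.add_assoc]

lemma apply_add_eq_of_seg_eq {v : ℕ → A} {x y L t : ℕ} (h : seg v x L = seg v y L)
    (ht : t < L) : v (x + t) = v (y + t) := by
  simpa [seg, List.getElem?_range ht] using congrArg (·[t]?) h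

lemma seg_rotate (v : ℕ → A) (x : ℕ) {N r : ℕ} (hr : r ≤ N) :
    (seg v x N).rotate r = seg v (x + r) (N - r) ++ seg v x r := by
  rw [List.rotate_eq_drop_append_take (by rwa [seg_length]), ← Nat.add_sub_cancel' hr, seg_add,
    List.drop_left' (seg_length v x r), List.take_left' (seg_length v x r), Nat.add_sub_cancel' hr]

lemma IsRot.length_eq {w₁ w₂ : List A} (h : IsRot w₁ w₂) : w₁.length = w₂.length := by
  obtain ⟨r, rfl⟩ := h
  exact (List.length_rotate w₁ r).symm

lemma exists_seg_eq_of_isRot {v : ℕ → A} {i k N : ℕ} (hN : 0 < N)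
    (hrot : IsRot (seg v i N) (seg v k N)) :
    ∃ r < N, seg v k (N - r) = seg v (i + r) (N - r) ∧ seg v (k + (N - r)) r = seg v i r := by
  obtain ⟨r₀, hr₀⟩ := hrot
  set r := r₀ % N
  have hr : r < N := Nat.mod_lt r₀ hN
  rw [← List.rotate_mod, seg_length, seg_rotate v i hr.le] at hr₀
  have hsplit : seg v k N = seg v k (N - r) ++ seg v (k + (N - r)) r := by
    rw [← seg_add, Nat.sub_add_cancel hr.le]
  exact ⟨r, hr, List.append_inj (hsplit.symm.trans hr₀) (by simp only [seg_length])⟩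

end Words

namespace Function.Periodic

variable {A : Type*} {v : ℕ → A} {n : ℕ}

lemma eq_of_modEq (hv : Periodic v n) {x y : ℕ} (h : x ≡ y [MOD n]) : v x = v y := by
  rw [← hv.map_mod_nat x, ← hv.map_mod_nat y, h]

lemma seg_eq_of_modEq (hv : Periodic v n) {x y : ℕ} (h : x ≡ y [MOD n]) (L : ℕ) :
    seg v x L = seg v y L := by
  simp only [seg, fun t => hv.eq_of_modEq (h.add_right t)]

lemma pw_seg (hv : Periodic v n) (x q : ℕ) : pw (seg v x n) q = seg v x (q * n) := by
  induction q with
  | zero => simp [pw, seg]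
  | succ q ih =>
    rw [pw, List.replicate_succ, List.flatten_cons, ← pw, ih, Nat.succ_mul, Nat.add_comm (q * n),
      seg_add, hv.seg_eq_of_modEq (Nat.add_mod_right x n)]

lemma pw_seg_append_seg (hv : Periodic v n) (x q c : ℕ) :
    pw (seg v x n) q ++ seg v x c = seg v x (q * n + c) := by
  rw [hv.pw_seg, seg_add, hv.seg_eq_of_modEq (x := x + q * n) (y := x) ?_ c]
  exact Nat.add_mul_mod_self_right x q n

lemma gcd {p q : ℕ} (hp : Periodic v p) (hq : Periodic v q) : Periodic v (Nat.gcd p q) := by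
  induction p, q using Nat.gcd.induction with
  | H0 q => simpa using hq
  | H1 p q hp0 ih =>
    rw [Nat.gcd_rec]
    refine ih (fun t => ?_) hp
    rw [← (hp.nat_mul (q / p)) (t + q % p), Nat.cast_id, Nat.add_assoc, Nat.mod_add_div', hq]

end Function.Periodic

section Primitive

variable {A : Type*} {v : ℕ → A} {n : ℕ}

lemma not_periodic_of_nonpower (hv : Periodic v n) (hnp : Nonpower (seg v 0 n)) {d : ℕ}
    (hd0 : 0 < d) (hdn : d < n) : ¬ Periodic v d := by
  intro hd
  have hg0 : 0 < Nat.gcd d n := Nat.gcd_pos_of_pos_left n hd0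
  have hgd : Nat.gcd d n ≤ d := Nat.le_of_dvd hd0 (Nat.gcd_dvd_left d n)
  obtain ⟨c, hc⟩ := Nat.gcd_dvd_right d n
  refine hnp ⟨seg v 0 (Nat.gcd d n), c, ?_, 0, ?_⟩
  · by_contra! hc2
    interval_cases c <;> omega
  · rw [List.rotate_zero, (hd.gcd hv).pw_seg, Nat.mul_comm, ← hc]

lemma modEq_of_seg_eq (hn : 0 < n) (hv : Periodic v n) (hnp : Nonpower (seg v 0 n))
    {x y L : ℕ} (hL : n ≤ L) (h : seg v x L = seg v y L) : x ≡ y [MOD n] := by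
  have hshift : ∀ t, v (x + t) = v (y + t) := fun t => by
    rw [← (hv.const_add x).map_mod_nat t, ← (hv.const_add y).map_mod_nat t]
    exact apply_add_eq_of_seg_eq h ((Nat.mod_lt t hn).trans_le hL)
  wlog hxy : x % n ≤ y % n generalizing x y
  · exact (this h.symm (fun t => (hshift t).symm) (le_of_not_ge hxy)).symm
  have hx : x % n < n := Nat.mod_lt x hn
  have hd : Periodic v (y % n - x % n) := fun t => by
    set s := t + n - x % n
    calc v (t + (y % n - x % n)) = v (y + s) := by
          refine hv.eq_of_modEq ?_
          calc t + (y % n - x % n) ≡ t + (y % n - x % n) + n [MOD n] :=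
                (Nat.add_mod_right _ n).symm
            _ = y % n + s := by omega
            _ ≡ y + s [MOD n] := (Nat.mod_modEq y n).add_right s
      _ = v (x + s) := (hshift s).symm
      _ = v t := by
          refine hv.eq_of_modEq ?_
          calc x + s ≡ x % n + s [MOD n] := ((Nat.mod_modEq x n).add_right s).symm
            _ = t + n := by omega
            _ ≡ t [MOD n] := Nat.add_mod_right t n
  have hy : y % n < n := Nat.mod_lt y hn
  have hd0 : y % n - x % n = 0 := by
    by_contra hd0
    exact not_periodic_of_nonpower hv hnp (Nat.pos_of_ne_zero hd0) (by omega) hd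
  exact (Nat.sub_eq_zero_iff_le.mp hd0).antisymm' hxy

theorem modEq_or_of_isRot_seg (hn : 0 < n) (hv : Periodic v n) (hnp : Nonpower (seg v 0 n))
    {i k N : ℕ} (hN : 2 * n ≤ N) (hrot : IsRot (seg v i N) (seg v k N)) :
    k ≡ i [MOD n] ∨ v (i + N) = v i ∨ v (k + N) = v k ∨ N ≡ 0 [MOD n] := by
  obtain ⟨r, hr, h₁, h₂⟩ := exists_seg_eq_of_isRot (by omega) hrot
  have window {x y L : ℕ} : n ≤ L → seg v x L = seg v y L → x ≡ y [MOD n] :=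
    modEq_of_seg_eq hn hv hnp
  rcases Nat.eq_zero_or_pos r with hr0 | hr0
  · left
    simpa [hr0] using window (by omega) h₁
  by_cases hr_small : r < n
  · right; left
    have hk : k ≡ i + r [MOD n] := window (by omega) h₁
    calc v (i + N) = v (k + (N - r)) := hv.eq_of_modEq <| by
          rw [show i + N = i + r + (N - r) by omega]
          exact (hk.add_right _).symm
      _ = v i := by simpa using apply_add_eq_of_seg_eq h₂ hr0
  by_cases hNr_small : N - r < n
  · right; right; left
    have hk : k + (N - r) ≡ i [MOD n] := window (by omega) h₂
    calc v (k + N) = v (i + r) := hv.eq_of_modEq <| by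
          rw [show k + N = k + (N - r) + r by omega]
          exact hk.add_right r
      _ = v k := by simpa using (apply_add_eq_of_seg_eq h₁ (t := 0) (by omega)).symm
  · right; right; right
    have hk₁ : k ≡ i + r [MOD n] := window (by omega) h₁
    have hk₂ : k + (N - r) ≡ i [MOD n] := window (by omega) h₂
    refine Nat.ModEq.add_left_cancel' i ?_
    calc i + N = i + r + (N - r) := by omega
      _ ≡ k + (N - r) [MOD n] := (hk₁.add_right _).symm
      _ ≡ i + 0 [MOD n] := hk₂

end Primitive

lemma add_mul_add_sub_mod_modEq {n x : ℕ} (hx : x < n) (c y : ℕ) :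
    x + (c * n + (y + n - x) % n) ≡ y [MOD n] :=
  calc x + (c * n + (y + n - x) % n) = x + (y + n - x) % n + c * n := by ring
    _ ≡ x + (y + n - x) % n [MOD n] := Nat.add_mul_mod_self_right _ c n
    _ ≡ x + (y + n - x) [MOD n] := (Nat.mod_modEq _ n).add_left x
    _ = y + n := by omega
    _ ≡ y [MOD n] := Nat.add_mod_right y n

theorem stmt3_general {A : Type*}
    (v : ℕ → A) (n : ℕ) (hn : 0 < n)
    (hper : ∀ t, v (t + n) = v t)
    (hnp : Nonpower (seg v 0 n))
    (i j k h : ℕ) (hi : i < n) (hj : j < n) (hk : k < n) (hh : h < n)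
    (hij : i ≠ j) (h1 : v i ≠ v j)
    (h3 : v k ≠ v h)
    (hne : (i, j) ≠ (k, h))
    (m l : ℕ) (hm : 2 ≤ m) :
    ¬ IsRot (pw (seg v i n) m ++ seg v i ((j + n - i) % n))
            (pw (seg v k n) l ++ seg v k ((h + n - k) % n)) := by
  have hv : Periodic v n := hper
  intro hrot
  rw [hv.pw_seg_append_seg, hv.pw_seg_append_seg] at hrot
  set N := m * n + (j + n - i) % n
  have hlen : N = l * n + (h + n - k) % n := by simpa [seg_length] using hrot.length_eq
  rw [← hlen] at hrot
  have hN : 2 * n ≤ N := le_add_right (Nat.mul_le_mul_right n hm)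
  have hiN : i + N ≡ j [MOD n] := add_mul_add_sub_mod_modEq hi m j
  have hkN : k + N ≡ h [MOD n] := hlen ▸ add_mul_add_sub_mod_modEq hk l h
  rcases modEq_or_of_isRot_seg hn hv hnp hN hrot with hki | hvi | hvk | hN0
  · have hki : k = i := hki.eq_of_lt_of_lt hk hi
    subst hki
    exact hne (by rw [(hiN.symm.trans hkN).eq_of_lt_of_lt hj hh])
  · exact h1 (hvi.symm.trans (hv.eq_of_modEq hiN))
  · exact h3 (hvk.symm.trans (hv.eq_of_modEq hkN))
  · exact hij (((hN0.add_left i).symm.trans hiN).eq_of_lt_of_lt hi hj)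

/-- (Non-conjugacy proposition.) For a nonpower cyclically reduced word `V`
and two distinct linked-type index pairs `(i,j) ≠ (k,h)`, for any `m ≥ 2` and `l ≥ 1`,
`V_i^m V_{i,j}` and `V_k^l V_{k,h}` are not cyclic permutations of one another. -/
theorem stmt3 {A : Type*} (bar : A → A) (hbar : ∀ x, bar (bar x) = x)
    (v : ℕ → A) (n : ℕ) (hn : 0 < n)
    (hper : ∀ t, v (t + n) = v t)
    (hred : ∀ t, v (t + 1) ≠ bar (v t))
    (hnp : Nonpower (seg v 0 n))
    (i j k h : ℕ) (hi : i < n) (hj : j < n) (hk : k < n) (hh : h < n)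
    (hij : i ≠ j) (h1 : v i ≠ v j) (h2 : bar (v i) ≠ v (j + n - 1))
    (hkh : k ≠ h) (h3 : v k ≠ v h) (h4 : bar (v k) ≠ v (h + n - 1))
    (hne : (i, j) ≠ (k, h))
    (m l : ℕ) (hm : 2 ≤ m) (hl : 1 ≤ l) :
    ¬ IsRot (pw (seg v i n) m ++ seg v i ((j + n - i) % n))
            (pw (seg v k n) l ++ seg v k ((h + n - k) % n)) :=
  stmt3_general v n hn hper hnp i j k h hi hj hk hh hij h1 h3 hne m l hm
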